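/- arXiv:2003.09641 — 3 statements merged into one kernel-verified Lean document; each statement's English description precedes it below -/
import Mathlib

section
/- Diagonalizing change of variables for the coupled bilinear system (Lemma 2.1, existence form): let W be a real Hilbert space, a, b : W →L[ℝ] W →L[ℝ] ℝ continuous bilinear forms, K a real symmetric positive definite J×J matrix, and E a real symmetric J×J matrix. Then there exist an invertible matrix P : Matrix (Fin J) (Fin J) ℝ and vectors d, e : Fin J → ℝ such that for all p̃, q̃ : Fin J → W, ∑_{i,j} K i j * a ((P ∘ p̃) j) ((P ∘ q̃) i) + ∑_{i,j} E i j * b ((P ∘ p̃) j) ((P ∘ q̃) i) = ∑_j ( d j * a (p̃ j) (q̃ j) + e j * b (p̃ j) (q̃ j) ), where (P ∘ x) i = ∑_k (P i k) • x k. -/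
open Matrix Finset

private lemma sum4_comm {J : ℕ} (f : Fin J → Fin J → Fin J → Fin J → ℝ) :
    ∑ i, ∑ j, ∑ k, ∑ l, f i j k l = ∑ l, ∑ k, ∑ i, ∑ j, f i j k l := by
  calc ∑ i, ∑ j, ∑ k, ∑ l, f i j k l
      = ∑ i, ∑ j, ∑ l, ∑ k, f i j k l :=
        Finset.sum_congr rfl fun i _ => Finset.sum_congr rfl fun j _ => Finset.sum_comm
    _ = ∑ i, ∑ l, ∑ j, ∑ k, f i j k l :=
        Finset.sum_congr rfl fun i _ => Finset.sum_comm
    _ = ∑ l, ∑ i, ∑ j, ∑ k, f i j k l := Finset.sum_comm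
    _ = ∑ l, ∑ i, ∑ k, ∑ j, f i j k l :=
        Finset.sum_congr rfl fun l _ => Finset.sum_congr rfl fun i _ => Finset.sum_comm
    _ = ∑ l, ∑ k, ∑ i, ∑ j, f i j k l :=
        Finset.sum_congr rfl fun l _ => Finset.sum_comm

private lemma expand_sum {J : ℕ} {W : Type*} [NormedAddCommGroup W] [InnerProductSpace ℝ W]
    (B : W →L[ℝ] W →L[ℝ] ℝ) (C P : Matrix (Fin J) (Fin J) ℝ) (p q : Fin J → W) :
    ∑ i, ∑ j, C i j * B (∑ k, P j k • p k) (∑ k, P i k • q k)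
      = ∑ l, ∑ k, (Pᵀ * C * P) l k * B (p k) (q l) := by
  have lhs_eq : ∀ i j, C i j * B (∑ k, P j k • p k) (∑ k, P i k • q k)
      = ∑ k, ∑ l, C i j * (P j k * (P i l * B (p k) (q l))) := by
    intro i j
    simp only [map_sum, _root_.map_smul, ContinuousLinearMap.sum_apply,
      ContinuousLinearMap.smul_apply, smul_eq_mul, Finset.mul_sum]
    rw [Finset.sum_comm]
    exact Finset.sum_congr rfl fun _ _ => Finset.sum_congr rfl fun _ _ => by ring
  simp only [lhs_eq]
  rw [sum4_comm (fun i j k l => C i j * (P j k * (P i l * B (p k) (q l))))]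
  refine Finset.sum_congr rfl fun l _ => Finset.sum_congr rfl fun k _ => ?_
  simp only [Matrix.mul_apply, Matrix.transpose_apply, Finset.sum_mul, Finset.mul_sum]
  rw [Finset.sum_comm]
  exact Finset.sum_congr rfl fun _ _ => Finset.sum_congr rfl fun _ _ => by ring

/-- existence of a diagonalizing change of variables for the
coupled bilinear system (Lemma 2.1, existence form). -/
theorem diagonalizing_change_of_variables
    (J : ℕ) (hJ : 0 < J)
    (W : Type*) [NormedAddCommGroup W] [InnerProductSpace ℝ W] [CompleteSpace W]
    (a b : W →L[ℝ] W →L[ℝ] ℝ)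
    (K E : Matrix (Fin J) (Fin J) ℝ)
    (hK : K.PosDef)
    (hE : Eᵀ = E) :
    ∃ (P : Matrix (Fin J) (Fin J) ℝ) (d e : Fin J → ℝ),
      IsUnit P.det ∧
      ∀ p q : Fin J → W,
        (∑ i, ∑ j, K i j * a (∑ k, P j k • p k) (∑ k, P i k • q k))
          + (∑ i, ∑ j, E i j * b (∑ k, P j k • p k) (∑ k, P i k • q k))
        = ∑ j, (d j * a (p j) (q j) + e j * b (p j) (q j)) := by
  classical
  set S : Matrix (Fin J) (Fin J) ℝ := open scoped MatrixOrder in CFC.sqrt K with hS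
  have hSsym : Sᵀ = S := by
    have := open scoped MatrixOrder in (CFC.sqrt_nonneg K).posSemidef.1
    rwa [Matrix.IsHermitian, conjTranspose_eq_transpose_of_trivial] at this
  have hSS : S * S = K := open scoped MatrixOrder in CFC.sqrt_mul_sqrt_self K hK.posSemidef.nonneg
  have hSdet : IsUnit S.det := by
    have h2 : S.det * S.det = K.det := by rw [← det_mul, hSS]
    have : K.det ≠ 0 := hK.det_pos.ne'
    exact isUnit_iff_ne_zero.mpr fun h => this (by rw [← h2, h, zero_mul])
  set Si : Matrix (Fin J) (Fin J) ℝ := S⁻¹ with hSi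
  have hSiS : Si * S = 1 := nonsing_inv_mul S hSdet
  have hSSi : S * Si = 1 := mul_nonsing_inv S hSdet
  have hSisym : Siᵀ = Si := by rw [hSi, transpose_nonsing_inv, hSsym]
  set M : Matrix (Fin J) (Fin J) ℝ := Si * E * Si with hM
  have hMherm : M.IsHermitian := by
    rw [Matrix.IsHermitian, conjTranspose_eq_transpose_of_trivial, hM,
      transpose_mul, transpose_mul, hSisym, hE, ← mul_assoc]
  set U : Matrix (Fin J) (Fin J) ℝ := (hMherm.eigenvectorUnitary : Matrix (Fin J) (Fin J) ℝ) with hU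
  have hUstar : Uᵀ * U = 1 := by
    have := (Matrix.mem_unitaryGroup_iff').mp hMherm.eigenvectorUnitary.2
    rwa [star_eq_conjTranspose, conjTranspose_eq_transpose_of_trivial] at this
  have hUdet : IsUnit U.det := by
    have h1 : Uᵀ.det * U.det = 1 := by rw [← det_mul, hUstar, det_one]
    rw [det_transpose] at h1
    exact IsUnit.of_mul_eq_one _ h1
  have hdiag : Uᵀ * M * U = diagonal (RCLike.ofReal ∘ hMherm.eigenvalues) := by
    have := hMherm.conjStarAlgAut_star_eigenvectorUnitary
    simp only [Unitary.conjStarAlgAut_star_apply, Unitary.coe_star, star_eq_conjTranspose, conjTranspose_eq_transpose_of_trivial] at this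
    exact this
  refine ⟨Si * U, fun _ => 1, fun j => (RCLike.ofReal ∘ hMherm.eigenvalues) j, ?_, ?_⟩
  · rw [det_mul]
    have hSidet : IsUnit Si.det := by
      have h1 : Si.det * S.det = 1 := by rw [← det_mul, hSiS, det_one]
      exact IsUnit.of_mul_eq_one _ h1
    exact hSidet.mul hUdet
  · have h1 : Si * K * Si = 1 := by
      rw [← hSS, show Si * (S * S) * Si = (Si * S) * (S * Si) by
        simp only [Matrix.mul_assoc], hSiS, hSSi, one_mul]
    have hKP : (Si * U)ᵀ * K * (Si * U) = 1 := by
      rw [transpose_mul, hSisym,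
        show Uᵀ * Si * K * (Si * U) = Uᵀ * (Si * K * Si) * U by
          simp only [Matrix.mul_assoc], h1, mul_one, hUstar]
    have hEP : (Si * U)ᵀ * E * (Si * U) = diagonal (RCLike.ofReal ∘ hMherm.eigenvalues) := by
      rw [transpose_mul, hSisym, ← hdiag, hM,
        show Uᵀ * Si * E * (Si * U) = Uᵀ * (Si * E * Si) * U by
          simp only [Matrix.mul_assoc]]
    intro p q
    rw [expand_sum a K (Si * U) p q, expand_sum b E (Si * U) p q, hKP, hEP, Finset.sum_add_distrib]
    congr 1
    · rw [Finset.sum_comm]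
      refine Finset.sum_congr rfl fun k _ => ?_
      rw [Finset.sum_eq_single k]
      · simp
      · intro l _ hlk; rw [Matrix.one_apply_ne hlk, zero_mul]
      · simp
    · rw [Finset.sum_comm]
      refine Finset.sum_congr rfl fun k _ => ?_
      rw [Finset.sum_eq_single k]
      · simp
      · intro l _ hlk; rw [Matrix.diagonal_apply_ne _ hlk, zero_mul]
      · simp
end

section
/- Equivalence of the original and transformed variational problems (Lemma 2.1, equivalence form): let W be a real Hilbert space, a, b : W →L[ℝ] W →L[ℝ] ℝ continuous bilinear forms, K, E real J×J matrices, and P : Matrix (Fin J) (Fin J) ℝ an invertible matrix such that Pᵀ * K * P = diag(d) and Pᵀ * E * P = diag(e) for some d, e : Fin J → ℝ. Let f : Fin J → (W →L[ℝ] ℝ) be given. Then p : Fin J → W satisfies ∑_{i,j} K i j * a (p j) (q i) + ∑_{i,j} E i j * b (p j) (q i) = ∑_i f i (q i) for all q : Fin J → W if and only if p̃ := (P⁻¹ ∘ p) satisfies ∑_j ( d j * a (p̃ j) (q̃ j) + e j * b (p̃ j) (q̃ j) ) = ∑_j F j (q̃ j) for all q̃ : Fin J → W, where F j = ∑_i (P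 i j) • f i and (M ∘ x) i = ∑_k (M i k) • x k for a matrix M. -/
open Matrix Finset

/-- equivalence of the original and transformed variational
problems (Lemma 2.1, equivalence form). -/
theorem transformed_variational_problem_equiv
    (J : ℕ) (hJ : 0 < J)
    (W : Type*) [NormedAddCommGroup W] [InnerProductSpace ℝ W] [CompleteSpace W]
    (a b : W →L[ℝ] W →L[ℝ] ℝ)
    (K E P : Matrix (Fin J) (Fin J) ℝ)
    (hP : IsUnit P.det)
    (d e : Fin J → ℝ)
    (hKdiag : Pᵀ * K * P = Matrix.diagonal d)
    (hEdiag : Pᵀ * E * P = Matrix.diagonal e)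
    (f : Fin J → (W →L[ℝ] ℝ))
    (p : Fin J → W) :
    (∀ q : Fin J → W,
        (∑ i, ∑ j, K i j * a (p j) (q i)) + (∑ i, ∑ j, E i j * b (p j) (q i))
          = ∑ i, f i (q i))
    ↔ (∀ qt : Fin J → W,
        ∑ j, (d j * a (∑ k, P⁻¹ j k • p k) (qt j) + e j * b (∑ k, P⁻¹ j k • p k) (qt j))
          = ∑ j, (∑ i, P i j • f i) (qt j)) := by
  have hPinv : P * P⁻¹ = 1 := Matrix.mul_nonsing_inv P hP
  have key : ∀ (M : Matrix (Fin J) (Fin J) ℝ) (m : Fin J → ℝ),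
      Pᵀ * M * P = Matrix.diagonal m →
      ∀ (c : W →L[ℝ] W →L[ℝ] ℝ) (qt : Fin J → W),
      (∑ i, ∑ j, M i j * c (p j) (∑ k, P i k • qt k))
        = ∑ j, m j * c (∑ k, P⁻¹ j k • p k) (qt j) := by
    intro M m hM c qt
    have hA : Pᵀ * M = Matrix.diagonal m * P⁻¹ := by
      have h2 : Pᵀ * M * P * P⁻¹ = Matrix.diagonal m * P⁻¹ := by rw [hM]
      rwa [Matrix.mul_assoc, hPinv, Matrix.mul_one] at h2
    calc (∑ i, ∑ j, M i j * c (p j) (∑ k, P i k • qt k))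
        = ∑ i, ∑ j, ∑ k, M i j * (P i k * c (p j) (qt k)) := by
          refine Finset.sum_congr rfl fun i _ => Finset.sum_congr rfl fun j _ => ?_
          rw [map_sum, Finset.mul_sum]
          refine Finset.sum_congr rfl fun k _ => ?_
          rw [ContinuousLinearMap.map_smul, smul_eq_mul]
      _ = ∑ k, ∑ j, ∑ i, M i j * (P i k * c (p j) (qt k)) := by
          rw [Finset.sum_comm]
          conv_rhs => rw [Finset.sum_comm]
          exact Finset.sum_congr rfl fun j _ => Finset.sum_comm
      _ = ∑ k, ∑ j, (∑ i, P i k * M i j) * c (p j) (qt k) := by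
          refine Finset.sum_congr rfl fun k _ => Finset.sum_congr rfl fun j _ => ?_
          rw [Finset.sum_mul]
          refine Finset.sum_congr rfl fun i _ => ?_
          ring
      _ = ∑ k, ∑ j, (Pᵀ * M) k j * c (p j) (qt k) := by
          simp only [Matrix.mul_apply, Matrix.transpose_apply]
      _ = ∑ k, m k * c (∑ l, P⁻¹ k l • p l) (qt k) := by
          refine Finset.sum_congr rfl fun k _ => ?_
          rw [hA, map_sum, ContinuousLinearMap.sum_apply, Finset.mul_sum]
          refine Finset.sum_congr rfl fun l _ => ?_
          rw [ContinuousLinearMap.map_smul, ContinuousLinearMap.smul_apply,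
            smul_eq_mul, Matrix.diagonal_mul]
          ring
  have keyf : ∀ qt : Fin J → W,
      (∑ i, f i (∑ k, P i k • qt k)) = ∑ j, (∑ i, P i j • f i) (qt j) := by
    intro qt
    simp only [map_sum, ContinuousLinearMap.map_smul, smul_eq_mul,
      ContinuousLinearMap.sum_apply, ContinuousLinearMap.smul_apply]
    exact Finset.sum_comm
  have hq : ∀ (q : Fin J → W) (i : Fin J),
      (∑ k, P i k • ∑ i', P⁻¹ k i' • q i') = q i := by
    intro q i
    simp only [Finset.smul_sum, smul_smul]
    rw [Finset.sum_comm]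
    have h3 : ∀ l, ∑ k, (P i k * P⁻¹ k l) • q l = ((P * P⁻¹) i l) • q l := by
      intro l
      rw [Matrix.mul_apply, Finset.sum_smul]
    simp only [h3, hPinv, Matrix.one_apply]
    simp
  constructor
  · intro h qt
    have h1 := h (fun i => ∑ k, P i k • qt k)
    rw [key K d hKdiag a qt, key E e hEdiag b qt, keyf qt] at h1
    rw [Finset.sum_add_distrib]
    exact h1
  · intro h q
    have h1 := h (fun j => ∑ i', P⁻¹ j i' • q i')
    rw [Finset.sum_add_distrib, ← key K d hKdiag a _, ← key E e hEdiag b _,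
      ← keyf _] at h1
    simp only [hq] at h1
    exact h1
end

section
/- Lower bound for the transformed coupling coefficients (inequality (4.13) of the paper): let λ > 0, τ ≥ 0, α : Fin J → ℝ, let E be a real symmetric positive semidefinite J×J matrix, let L be the J×J matrix with entries L i j = λ⁻¹ * α i * α j, and suppose P : Matrix (Fin J) (Fin J) ℝ is such that Pᵀ * (τ • E + L) * P is the diagonal matrix with diagonal entries γ̃ : Fin J → ℝ. Then, writing α̃ j = ∑_i P i j * α i (the j-th entry of Pᵀ applied to α), one has γ̃ j ≥ (α̃ j)^2 / λ for every j. -/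
open Matrix Finset

/-- lower bound for the transformed coupling coefficients
(inequality (4.13) of the paper). -/
theorem transformed_gamma_lower_bound
    (J : ℕ) (hJ : 0 < J)
    (lam τ : ℝ) (hlam : 0 < lam) (hτ : 0 ≤ τ)
    (α : Fin J → ℝ)
    (E : Matrix (Fin J) (Fin J) ℝ)
    (hE_symm : Eᵀ = E)
    (hE_psd : ∀ w : Fin J → ℝ, 0 ≤ w ⬝ᵥ E *ᵥ w)
    (L : Matrix (Fin J) (Fin J) ℝ)
    (hL : ∀ i j, L i j = lam⁻¹ * α i * α j)
    (P : Matrix (Fin J) (Fin J) ℝ)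
    (γt : Fin J → ℝ)
    (hdiag : Pᵀ * (τ • E + L) * P = Matrix.diagonal γt) :
    ∀ j, (∑ i, P i j * α i) ^ 2 / lam ≤ γt j := by
  intro j
  set w : Fin J → ℝ := fun i => P i j with hw
  have hγ : γt j = w ⬝ᵥ ((τ • E + L) *ᵥ w) := by
    have := congrArg (fun M => M j j) hdiag
    simp only [Matrix.diagonal_apply_eq] at this
    rw [← this]
    simp only [Matrix.mul_apply, Matrix.transpose_apply, dotProduct, Matrix.mulVec,
      Finset.sum_mul, Finset.mul_sum]
    rw [Finset.sum_comm]
    congr 1; ext k; congr 1; ext i; ring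
  have hLw : w ⬝ᵥ (L *ᵥ w) = (∑ i, P i j * α i) ^ 2 / lam := by
    simp only [dotProduct, Matrix.mulVec, hL]
    rw [div_eq_inv_mul, sq, Finset.sum_mul_sum, Finset.mul_sum]
    refine Finset.sum_congr rfl fun i _ => ?_
    rw [Finset.mul_sum, Finset.mul_sum]
    refine Finset.sum_congr rfl fun k _ => ?_
    ring
  have hEw : 0 ≤ τ * (w ⬝ᵥ (E *ᵥ w)) := mul_nonneg hτ (hE_psd w)
  have : γt j = τ * (w ⬝ᵥ (E *ᵥ w)) + (∑ i, P i j * α i) ^ 2 / lam := by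
    rw [hγ, Matrix.add_mulVec, dotProduct_add, hLw, Matrix.smul_mulVec,
      dotProduct_smul, smul_eq_mul]
  linarith
end
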